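/- Domain inverse inequality: Let T ⊆ ℝ^d be a nonempty bounded open set and let T̂ ⊆ T be a nonempty open subset. Then for every integer r ≥ 0 there exists a constant C > 0 such that ∫_T q(x)² dx ≤ C ∫_{T̂} q(x)² dx for every real polynomial function q on ℝ^d of total degree at most r. -/

import Mathlib

/-!
On the finite-dimensional space of polynomials of degree at most `r`, `q ↦ (∫_T̂ q²)^(1/2)` is a
norm: a polynomial vanishing almost everywhere on the nonempty open set `T̂` vanishes on `T̂` by
continuity, hence everywhere by the identity theorem for analytic functions. The map
`q ↦ q|_T` into `L²(T)` is linear on a finite-dimensional space, hence bounded with respect to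
this norm.
-/

open MeasureTheory
open scoped BigOperators

noncomputable section

/-- `f` is (the evaluation of) a real polynomial in `d` variables of total degree at most `r`. -/
def IsPolyDeg (d r : ℕ) (f : EuclideanSpace ℝ (Fin d) → ℝ) : Prop :=
  ∃ P : MvPolynomial (Fin d) ℝ, P.totalDegree ≤ r ∧
    ∀ x : EuclideanSpace ℝ (Fin d), f x = MvPolynomial.eval (fun j => x j) P

theorem LinearMap.exists_norm_le_mul_norm_of_injective {𝕜 V E F : Type*}
    [NontriviallyNormedField 𝕜] [CompleteSpace 𝕜] [AddCommGroup V] [Module 𝕜 V]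
    [FiniteDimensional 𝕜 V] [NormedAddCommGroup E] [NormedSpace 𝕜 E]
    [NormedAddCommGroup F] [NormedSpace 𝕜 F]
    (f : V →ₗ[𝕜] E) (g : V →ₗ[𝕜] F) (hf : Function.Injective f) :
    ∃ C > 0, ∀ v, ‖g v‖ ≤ C * ‖f v‖ := by
  let e := LinearEquiv.ofInjective f hf
  obtain ⟨C, hC, hbound⟩ := (g ∘ₗ e.symm.toLinearMap).toContinuousLinearMap.bound
  refine ⟨C, hC, fun v => ?_⟩
  simpa [e] using hbound (e v)

namespace LinearMap

variable {𝕜 V α E : Type*} [NormedField 𝕜] [AddCommGroup V] [Module 𝕜 V] [MeasurableSpace α]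
  [NormedAddCommGroup E] [NormedSpace 𝕜 E] {p : ENNReal} {μ : Measure α}

def toLpOfMemLp (φ : V →ₗ[𝕜] α → E) (h : ∀ v, MemLp (φ v) p μ) : V →ₗ[𝕜] Lp E p μ where
  toFun v := (h v).toLp _
  map_add' v w := by simp only [map_add]; exact MemLp.toLp_add _ _
  map_smul' c v := by simp only [map_smul]; exact MemLp.toLp_const_smul _ _

theorem toLpOfMemLp_apply (φ : V →ₗ[𝕜] α → E) (h : ∀ v, MemLp (φ v) p μ) (v : V) :
    toLpOfMemLp φ h v = (h v).toLp _ := rfl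

end LinearMap

theorem MeasureTheory.MemLp.norm_toLp_sq {α : Type*} [MeasurableSpace α] {μ : Measure α}
    {f : α → ℝ} (hf : MemLp f 2 μ) : ‖hf.toLp f‖ ^ 2 = ∫ x, f x ^ 2 ∂μ := by
  rw [← real_inner_self_eq_norm_sq, L2.inner_def]
  exact integral_congr_ae (hf.coeFn_toLp.mono fun x hx => by simp [hx, sq])

theorem exists_integral_sq_le_mul_of_finiteDimensional {α V : Type*} [MeasurableSpace α]
    {μ ν : Measure α} [AddCommGroup V] [Module ℝ V] [FiniteDimensional ℝ V]
    (φ : V →ₗ[ℝ] α → ℝ) (hμ : ∀ v, MemLp (φ v) 2 μ) (hν : ∀ v, MemLp (φ v) 2 ν)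
    (hinj : ∀ v, φ v =ᵐ[ν] 0 → v = 0) :
    ∃ C > 0, ∀ v, ∫ x, φ v x ^ 2 ∂μ ≤ C * ∫ x, φ v x ^ 2 ∂ν := by
  have hinj' : Function.Injective (φ.toLpOfMemLp hν) := by
    refine (injective_iff_map_eq_zero _).2 fun v hv => hinj v ?_
    have hcoe := (hν v).coeFn_toLp
    rw [← LinearMap.toLpOfMemLp_apply φ hν, hv] at hcoe
    exact hcoe.symm.trans (Lp.coeFn_zero _ _ _)
  obtain ⟨C, hC, hle⟩ := (φ.toLpOfMemLp hν).exists_norm_le_mul_norm_of_injective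
    (φ.toLpOfMemLp hμ) hinj'
  refine ⟨C ^ 2, by positivity, fun v => ?_⟩
  rw [← (hμ v).norm_toLp_sq, ← (hν v).norm_toLp_sq, ← mul_pow]
  exact pow_le_pow_left₀ (norm_nonneg _) (hle v) 2

theorem Continuous.memLp_restrict_of_isBounded {X E : Type*} [PseudoMetricSpace X]
    [ProperSpace X] [MeasurableSpace X] [OpensMeasurableSpace X] {μ : Measure X}
    [IsFiniteMeasureOnCompacts μ] [NormedAddCommGroup E] {f : X → E} (hf : Continuous f)
    {S : Set X} (hS : Bornology.IsBounded S) (p : ENNReal) : MemLp f p (μ.restrict S) := by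
  have hK := hS.isCompact_closure
  have : IsFiniteMeasure (μ.restrict (closure S)) :=
    isFiniteMeasure_restrict.2 hK.measure_lt_top.ne
  obtain ⟨C, hC⟩ := hK.exists_bound_of_continuousOn hf.continuousOn
  have hbound : ∀ᵐ x ∂μ.restrict (closure S), ‖f x‖ ≤ C :=
    ae_restrict_of_forall_mem isClosed_closure.measurableSet hC
  exact ((memLp_top_of_bound hf.aestronglyMeasurable C hbound).mono_exponent le_top).mono_measure
    (Measure.restrict_mono subset_closure le_rfl)

namespace MvPolynomial

variable {𝕜 ι : Type*} [RCLike 𝕜]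

def evalEuclideanₗ : MvPolynomial ι 𝕜 →ₗ[𝕜] EuclideanSpace 𝕜 ι → 𝕜 where
  toFun P x := eval (fun j => x j) P
  map_add' P Q := by ext x; simp
  map_smul' c P := by ext x; simp

@[simp]
theorem evalEuclideanₗ_apply (P : MvPolynomial ι 𝕜) (x : EuclideanSpace 𝕜 ι) :
    evalEuclideanₗ P x = eval (fun j => x j) P := rfl

variable [Fintype ι]

theorem analyticOnNhd_evalEuclideanₗ (P : MvPolynomial ι 𝕜) :
    AnalyticOnNhd 𝕜 (evalEuclideanₗ P) Set.univ :=
  (AnalyticOnNhd.eval_continuousLinearMap' (fun j => EuclideanSpace.proj (𝕜 := 𝕜) j) P).congr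
    isOpen_univ fun x _ => by simp

theorem continuous_evalEuclideanₗ (P : MvPolynomial ι 𝕜) : Continuous (evalEuclideanₗ P) :=
  continuousOn_univ.1 (analyticOnNhd_evalEuclideanₗ P).continuousOn

theorem eq_zero_of_evalEuclideanₗ_eqOn_zero {P : MvPolynomial ι 𝕜}
    {U : Set (EuclideanSpace 𝕜 ι)} (hU : IsOpen U) (hUne : U.Nonempty)
    (h : Set.EqOn (evalEuclideanₗ P) 0 U) : P = 0 := by
  obtain ⟨x₀, hx₀⟩ := hUne
  have hzero := (analyticOnNhd_evalEuclideanₗ P).eqOn_zero_of_preconnected_of_eventuallyEq_zero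
    isPreconnected_univ (Set.mem_univ x₀) (Filter.eventuallyEq_of_mem (hU.mem_nhds hx₀) h)
  exact funext fun y => by simpa using hzero (Set.mem_univ (WithLp.toLp 2 y))

end MvPolynomial

theorem stmt14_general (d : ℕ) (T : Set (EuclideanSpace ℝ (Fin d)))
    (hTbdd : Bornology.IsBounded T)
    (That : Set (EuclideanSpace ℝ (Fin d))) (hThat : IsOpen That) (hThatne : That.Nonempty)
    (hsub : That ⊆ T) :
    ∀ r : ℕ, ∃ C > (0 : ℝ), ∀ q : EuclideanSpace ℝ (Fin d) → ℝ, IsPolyDeg d r q →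
      ∫ x in T, (q x) ^ 2 ≤ C * ∫ x in That, (q x) ^ 2 := by
  intro r
  let φ := MvPolynomial.evalEuclideanₗ.domRestrict (MvPolynomial.restrictTotalDegree (Fin d) ℝ r)
  have hmemLp {S} (hS : Bornology.IsBounded S) (v) : MemLp (φ v) 2 (volume.restrict S) :=
    (MvPolynomial.continuous_evalEuclideanₗ _).memLp_restrict_of_isBounded hS 2
  have hinj (v) (hv : φ v =ᵐ[volume.restrict That] 0) : v = 0 :=
    Subtype.ext <| MvPolynomial.eq_zero_of_evalEuclideanₗ_eqOn_zero hThat hThatne <|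
      Measure.eqOn_open_of_ae_eq hv hThat
        (MvPolynomial.continuous_evalEuclideanₗ _).continuousOn continuousOn_const
  obtain ⟨C, hC, hle⟩ := exists_integral_sq_le_mul_of_finiteDimensional φ (hmemLp hTbdd)
    (hmemLp (hTbdd.subset hsub)) hinj
  refine ⟨C, hC, fun q ⟨P, hdeg, hq⟩ => ?_⟩
  have hqφ : q = φ ⟨P, (MvPolynomial.mem_restrictTotalDegree _ _ _).2 hdeg⟩ := funext hq
  simpa only [hqφ] using hle _

/-- domain inverse inequality. -/
theorem stmt14 (d : ℕ) (T : Set (EuclideanSpace ℝ (Fin d)))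
    (hTopen : IsOpen T) (hTne : T.Nonempty) (hTbdd : Bornology.IsBounded T)
    (That : Set (EuclideanSpace ℝ (Fin d))) (hThat : IsOpen That) (hThatne : That.Nonempty)
    (hsub : That ⊆ T) :
    ∀ r : ℕ, ∃ C > (0 : ℝ), ∀ q : EuclideanSpace ℝ (Fin d) → ℝ, IsPolyDeg d r q →
      ∫ x in T, (q x) ^ 2 ≤ C * ∫ x in That, (q x) ^ 2 :=
  stmt14_general d T hTbdd That hThat hThatne hsub
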